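/- arXiv:solv-int/9709007 — 2 statements merged into one kernel-verified Lean document; each statement's English description precedes it below -/
import Mathlib

section
/- Fix i ∈ {1,…,N}. Let (ζ_1,…,ζ_N) be a Lamé solution with ζ_i nowhere vanishing, (X_1,…,X_N) a tangent solution, and Ω : ℤ^N → ℝ a potential satisfying Δ_m Ω = X_m·(T_m ζ_m) for all m = 1,…,N. Define the adjoint Levy-transformed data X_i[1] := −Ω/ζ_i, X_k[1] := X_k − Q_{ki}·Ω/ζ_i for k ≠ i, and Q_{ik}[1] := −ζ_k/ζ_i for k ≠ i. Then for every k ≠ i: Δ_k X_i[1] = (T_k Q_{ik}[1])·X_k[1]. -/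
noncomputable section

/-- Shift operator `T_j`: `(T_j f)(n) = f(n + e_j)`. -/
def T {N : ℕ} (j : Fin N) (f : (Fin N → ℤ) → ℝ) : (Fin N → ℤ) → ℝ :=
  fun n => f (n + Pi.single j 1)

/-- Difference operator `Δ_j = T_j − 1`. -/
def Δ {N : ℕ} (j : Fin N) (f : (Fin N → ℤ) → ℝ) : (Fin N → ℤ) → ℝ :=
  fun n => f (n + Pi.single j 1) - f n

/-!
The potential and the Lamé equations give `Δ_k Ω = X_k · T_k ζ_k` and
`Δ_k ζ_i = Q_{ki} · T_k ζ_k`, so the discrete quotient rule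
`Δ_k (Ω/ζ_i) = (Δ_k Ω − (Ω/ζ_i) Δ_k ζ_i) / T_k ζ_i` factors out `T_k ζ_k / T_k ζ_i`
and leaves exactly `X_k − Q_{ki} Ω/ζ_i`.
-/

section DiscreteCalculus

variable {N : ℕ} (j : Fin N)

theorem T_neg (f : (Fin N → ℤ) → ℝ) : T j (-f) = -T j f := rfl

theorem T_div (f g : (Fin N → ℤ) → ℝ) : T j (f / g) = T j f / T j g := rfl

theorem Δ_neg (f : (Fin N → ℤ) → ℝ) : Δ j (-f) = -Δ j f := by
  funext n
  simp only [Δ, Pi.neg_apply]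
  ring

theorem Δ_div (f : (Fin N → ℤ) → ℝ) {g : (Fin N → ℤ) → ℝ} (hg : ∀ n, g n ≠ 0) :
    Δ j (f / g) = (Δ j f - f / g * Δ j g) / T j g := by
  funext n
  have hgn := hg n
  have hTgn := hg (n + Pi.single j 1)
  simp only [Δ, T, Pi.div_apply, Pi.sub_apply, Pi.mul_apply]
  field_simp
  ring

end DiscreteCalculus

theorem statement_10_general (N : ℕ)
    (Q : Fin N → Fin N → (Fin N → ℤ) → ℝ)
    (i : Fin N)
    (ζ X : Fin N → (Fin N → ℤ) → ℝ)
    (hζ : ∀ j k : Fin N, j ≠ k → Δ j (ζ k) = Q j k * T j (ζ j))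
    (hζi : ∀ n : Fin N → ℤ, ζ i n ≠ 0)
    (Ω : (Fin N → ℤ) → ℝ)
    (hΩ : ∀ m : Fin N, Δ m Ω = X m * T m (ζ m)) :
    ∀ k : Fin N, k ≠ i →
      Δ k (-(Ω / ζ i))
        = T k (-(ζ k / ζ i)) * (X k - Q k i * Ω / ζ i) := by
  intro k hk
  rw [Δ_neg, Δ_div k Ω hζi, hΩ k, hζ k i hk, T_neg, T_div]
  funext n
  simp only [Pi.neg_apply, Pi.mul_apply, Pi.div_apply, Pi.sub_apply]
  ring

/-- Adjoint Levy transformation in the `i`-th direction: for every `k ≠ i`,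
`Δ_k X_i[1] = (T_k Q_{ik}[1])·X_k[1]` with `X_i[1] = −Ω/ζ_i`,
`X_k[1] = X_k − Q_{ki}·Ω/ζ_i` and `Q_{ik}[1] = −ζ_k/ζ_i`, where `Ω` is the potential
with `Δ_m Ω = X_m·(T_m ζ_m)`. -/
theorem statement_10 (N : ℕ) (hN : 2 ≤ N)
    (Q : Fin N → Fin N → (Fin N → ℤ) → ℝ)
    (i : Fin N)
    (ζ X : Fin N → (Fin N → ℤ) → ℝ)
    (hζ : ∀ j k : Fin N, j ≠ k → Δ j (ζ k) = Q j k * T j (ζ j))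
    (hX : ∀ j k : Fin N, j ≠ k → Δ k (X j) = T k (Q j k) * X k)
    (hζi : ∀ n : Fin N → ℤ, ζ i n ≠ 0)
    (Ω : (Fin N → ℤ) → ℝ)
    (hΩ : ∀ m : Fin N, Δ m Ω = X m * T m (ζ m)) :
    ∀ k : Fin N, k ≠ i →
      Δ k (-(Ω / ζ i))
        = T k (-(ζ k / ζ i)) * (X k - Q k i * Ω / ζ i) :=
  statement_10_general N Q i ζ X hζ hζi Ω hΩ
end
end

section
/- Let ξ^1, …, ξ^M be tangent solutions, each ξ^a = (ξ^a_1,…,ξ^a_N), and let 𝒲 be the associated discrete multi-Wroński matrix for the partition M = m_1 + … + m_N. Fix k ∈ {1,…,N} and let 𝒲̄ be the M×M matrix obtained from 𝒲 by replacing the last row of the k-th block, (Δ_k^{m_k−1} ξ^1_k, …, Δ_k^{m_k−1} ξ^M_k), by (T_k^{−1} Δ_k^{m_k−1} ξ^1_k, …, T_k^{−1} Δ_k^{m_k−1} ξ^M_k). Then det 𝒲 = T_k(det 𝒲̄), i.e., for every n ∈ ℤ^N, det 𝒲(n) = det 𝒲̄(n + e_k). -/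
noncomputable section

/-- The discrete multi-Wroński matrix `𝒲(n)` of the `M = m_1 + ⋯ + m_N` tangent
solutions `ξ^a` (`a` ranges over the canonical `M`-element index set
`Σ j : Fin N, Fin (m j)`): its row `(j, p)` is `(Δ_j^p ξ^a_j(n))_a`. -/
def Wmat {N : ℕ} (m : Fin N → ℕ)
    (ξ : (Σ j : Fin N, Fin (m j)) → Fin N → (Fin N → ℤ) → ℝ) (n : Fin N → ℤ) :
    Matrix (Σ j : Fin N, Fin (m j)) (Σ j : Fin N, Fin (m j)) ℝ :=
  Matrix.of fun r a => (Δ r.1)^[(r.2 : ℕ)] (ξ a r.1) n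

/-- The index `(k, m_k − 1)` of the last row of the `k`-th block. -/
def lastRow {N : ℕ} (m : Fin N → ℕ) (k : Fin N) (h : 0 < m k) :
    Σ j : Fin N, Fin (m j) :=
  ⟨k, ⟨m k - 1, Nat.sub_lt h Nat.one_pos⟩⟩

lemma Δ_add {N : ℕ} (j : Fin N) (f g : (Fin N → ℤ) → ℝ) :
    Δ j (f + g) = Δ j f + Δ j g := by
  funext n; simp [Δ]; ring

lemma Δ_mul {N : ℕ} (j : Fin N) (f g : (Fin N → ℤ) → ℝ) :
    Δ j (f * g) = T j f * Δ j g + Δ j f * g := by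
  funext n; simp [Δ, T]; ring

lemma Δ_sum {N : ℕ} (j : Fin N) {α : Type*} (s : Finset α) (f : α → (Fin N → ℤ) → ℝ) :
    Δ j (∑ i ∈ s, f i) = ∑ i ∈ s, Δ j (f i) := by
  funext n; simp [Δ, Finset.sum_apply, Finset.sum_sub_distrib]

lemma Δ_comm {N : ℕ} (j k : Fin N) : Function.Commute (Δ j) (Δ k) := by
  intro f; funext n
  simp only [Function.comp_apply, Δ]
  rw [add_right_comm]
  ring

/-- If `M` is obtained from `W` by adding to each row a linear combination of
`b`-lower rows of `W`, then `det M = det W`. -/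
lemma det_eq_of_lower {ι : Type*} [Fintype ι] [DecidableEq ι] (b : ι → ℕ)
    (hb : Function.Injective b) (M W : Matrix ι ι ℝ)
    (H : ∀ r, ∃ g : ι → ℝ, (∀ s, g s ≠ 0 → b s < b r) ∧
      ∀ t, M r t = W r t + ∑ s, g s * W s t) :
    M.det = W.det := by
  classical
  set g : ι → ι → ℝ := fun r => (H r).choose with hg
  have hsupp : ∀ r s, g r s ≠ 0 → b s < b r := fun r => (H r).choose_spec.1
  have hrow : ∀ r t, M r t = W r t + ∑ s, g r s * W s t := fun r => (H r).choose_spec.2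
  set A : Matrix ι ι ℝ := Matrix.of fun r s => (if r = s then (1:ℝ) else 0) + g r s with hA
  have hMA : M = A * W := by
    ext r t
    rw [Matrix.mul_apply]
    simp only [hA, Matrix.of_apply, add_mul, Finset.sum_add_distrib, ite_mul, one_mul, zero_mul]
    rw [Finset.sum_ite_eq Finset.univ r (fun s => W s t)]
    simp [hrow r t]
  letI : LinearOrder ι := LinearOrder.lift' b hb
  have hAdet : A.det = 1 := by
    rw [Matrix.det_of_lowerTriangular A]
    · have : ∀ i, A i i = 1 := by
        intro i
        have : g i i = 0 := by
          by_contra h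
          exact lt_irrefl (b i) (hsupp i i h)
        simp [hA, this]
      simp [this]
    · intro i j hij
      have hij' : i < j := hij
      have hbij : b i < b j := hij'
      have hne : i ≠ j := fun h => by subst h; exact lt_irrefl _ hbij
      have : g i j = 0 := by
        by_contra h
        exact absurd (hsupp i j h) (not_lt.2 (le_of_lt hbij))
      simp [hA, hne, this]
  rw [hMA, Matrix.det_mul, hAdet, one_mul]

/-- Discrete Leibniz-type expansion: `Δ_j^p (F·v)` is a function-coefficient
combination of `v` and the `Δ_j^t u`, `t < p`, whenever `Δ_j v = R·u`. -/
lemma expand {N : ℕ} (j : Fin N) (R F : (Fin N → ℤ) → ℝ) (p : ℕ) :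
    ∃ G : (Fin N → ℤ) → ℝ, ∃ c : ℕ → (Fin N → ℤ) → ℝ,
      ∀ u v : (Fin N → ℤ) → ℝ, Δ j v = R * u →
        (Δ j)^[p] (F * v) = G * v + ∑ t ∈ Finset.range p, c t * (Δ j)^[t] u := by
  induction p with
  | zero => exact ⟨F, fun _ => 0, fun u v _ => by simp⟩
  | succ p ih =>
    obtain ⟨G, c, hGc⟩ := ih
    refine ⟨Δ j G, fun t =>
      (if t < p then Δ j (c t) else 0) +
      (if h : 0 < t ∧ t ≤ p then T j (c (t - 1)) else 0) +
      (if t = 0 then T j G * R else 0), fun u v hv => ?_⟩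
    rw [Function.iterate_succ_apply', hGc u v hv, Δ_add, Δ_mul, Δ_sum, hv]
    have hterm : ∀ t, Δ j (c t * (Δ j)^[t] u)
        = T j (c t) * (Δ j)^[t + 1] u + Δ j (c t) * (Δ j)^[t] u := by
      intro t
      rw [Δ_mul, Function.iterate_succ_apply']
    simp only [hterm]
    rw [Finset.sum_add_distrib]
    simp only [add_mul, Finset.sum_add_distrib]
    have h1 : ∑ t ∈ Finset.range (p + 1),
        (if t < p then Δ j (c t) else 0) * (Δ j)^[t] u
        = ∑ t ∈ Finset.range p, Δ j (c t) * (Δ j)^[t] u := by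
      rw [Finset.sum_range_succ, if_neg (lt_irrefl p), zero_mul, add_zero]
      exact Finset.sum_congr rfl fun t ht => by
        rw [if_pos (Finset.mem_range.1 ht)]
    have h2 : ∑ t ∈ Finset.range (p + 1),
        (if h : 0 < t ∧ t ≤ p then T j (c (t - 1)) else 0) * (Δ j)^[t] u
        = ∑ t ∈ Finset.range p, T j (c t) * (Δ j)^[t + 1] u := by
      rw [Finset.sum_range_succ']
      simp only [Nat.add_sub_cancel]
      have : (if h : 0 < 0 ∧ 0 ≤ p then T j (c (0 - 1)) else 0) * (Δ j)^[0] u = 0 := by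
        simp
      rw [this, add_zero]
      exact Finset.sum_congr rfl fun t ht => by
        rw [dif_pos ⟨Nat.succ_pos t, Nat.succ_le_of_lt (Finset.mem_range.1 ht)⟩]
    have h3 : ∑ t ∈ Finset.range (p + 1),
        (if t = 0 then T j G * R else 0) * (Δ j)^[t] u
        = T j G * R * u := by
      rw [Finset.sum_eq_single 0]
      · simp
      · intro t _ ht; simp [ht]
      · simp
    rw [h1, h2, h3]
    ring

/-- Lemma 1, equation (10): `det 𝒲 = T_k(det 𝒲̄)`, where `𝒲̄` is obtained from `𝒲`
by replacing the last row of the `k`-th block by `T_k^{−1} Δ_k^{m_k−1} ξ_k`. -/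
theorem statement_16 (N : ℕ) (hN : 2 ≤ N)
    (Q : Fin N → Fin N → (Fin N → ℤ) → ℝ)
    (m : Fin N → ℕ) (hm : ∀ j, 0 < m j)
    (ξ : (Σ j : Fin N, Fin (m j)) → Fin N → (Fin N → ℤ) → ℝ)
    (hξ : ∀ a, ∀ j k : Fin N, j ≠ k → Δ k (ξ a j) = T k (Q j k) * ξ a k)
    (k : Fin N) :
    ∀ n : Fin N → ℤ,
      (Wmat m ξ n).det
        = ((Wmat m ξ (n + Pi.single k 1)).updateRow (lastRow m k (hm k))
            (fun a => (Δ k)^[m k - 1] (ξ a k) (n + Pi.single k 1 - Pi.single k 1))).det := by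
  classical
  intro n
  set S : ℕ := Finset.univ.sup m + 1 with hSdef
  have hS : ∀ i, m i < S := fun i =>
    Nat.lt_succ_of_le (Finset.le_sup (Finset.mem_univ i))
  set b : (Σ j : Fin N, Fin (m j)) → ℕ :=
    fun s => if s.1 = k then m k - 1 - (s.2 : ℕ) else S * (1 + (s.1 : ℕ)) + (s.2 : ℕ)
    with hbdef
  have keyS : ∀ A B x y : ℕ, x < S → y < S → S * A + x = S * B + y → A = B ∧ x = y := by
    intro A B x y hx hy hxy
    have hAB : A = B := by
      by_contra hne
      rcases Nat.lt_or_ge A B with h | h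
      · have h1 : S * A + x < S * (A + 1) := by
          have : S * (A + 1) = S * A + S := by ring
          omega
        have h2 : S * (A + 1) ≤ S * B := Nat.mul_le_mul_left S h
        omega
      · have h' : B < A := lt_of_le_of_ne h (Ne.symm hne)
        have h1 : S * B + y < S * (B + 1) := by
          have : S * (B + 1) = S * B + S := by ring
          omega
        have h2 : S * (B + 1) ≤ S * A := Nat.mul_le_mul_left S h'
        omega
    subst hAB
    exact ⟨rfl, by omega⟩
  have hb : Function.Injective b := by
    rintro ⟨i, q⟩ ⟨i', q'⟩ hss
    simp only [hbdef] at hss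
    by_cases hi : i = k <;> by_cases hi' : i' = k
    · subst hi; subst hi'
      rw [if_pos rfl, if_pos rfl] at hss
      have hq := q.2; have hq' := q'.2
      have : (q : ℕ) = (q' : ℕ) := by omega
      rw [Fin.ext this]
    · rw [if_pos hi, if_neg hi'] at hss
      have h1 : S ≤ S * (1 + (i' : ℕ)) := Nat.le_mul_of_pos_right S (by omega)
      have : m k - 1 - (q : ℕ) < S := by
        have := hS k; omega
      omega
    · rw [if_neg hi, if_pos hi'] at hss
      have h1 : S ≤ S * (1 + (i : ℕ)) := Nat.le_mul_of_pos_right S (by omega)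
      have : m k - 1 - (q' : ℕ) < S := by
        have := hS k; omega
      omega
    · rw [if_neg hi, if_neg hi'] at hss
      have hq : (q : ℕ) < S := lt_trans q.2 (hS i)
      have hq' : (q' : ℕ) < S := lt_trans q'.2 (hS i')
      obtain ⟨h1, h2⟩ := keyS _ _ _ _ hq hq' hss
      have hii : i = i' := Fin.ext (by omega)
      subst hii
      rw [Fin.ext h2]
  refine (det_eq_of_lower b hb _ (Wmat m ξ n) ?_).symm
  rintro ⟨j, p⟩
  by_cases hr : (⟨j, p⟩ : Σ j : Fin N, Fin (m j)) = lastRow m k (hm k)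
  · -- the replaced row: it equals the corresponding row of `Wmat m ξ n`
    refine ⟨0, fun s h => absurd rfl h, fun t => ?_⟩
    rw [hr, Matrix.updateRow_self]
    simp [Wmat, lastRow, add_sub_cancel_right]
  · by_cases hj : j = k
    · -- a non-last row of the `k`-th block
      subst hj
      have hp_ne : (p : ℕ) ≠ m j - 1 := by
        intro h
        exact hr (congrArg (Sigma.mk j) (Fin.ext h))
      have hplt : (p : ℕ) + 1 < m j := by
        have := p.2; omega
      set pt : Σ j : Fin N, Fin (m j) := ⟨j, ⟨(p : ℕ) + 1, hplt⟩⟩ with hpt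
      refine ⟨fun s => if s = pt then 1 else 0, ?_, ?_⟩
      · intro s hs
        have hspt : s = pt := by
          by_contra h
          simp [h] at hs
        subst hspt
        simp only [hbdef, hpt, if_pos rfl]
        have := p.2
        omega
      · intro t
        rw [Matrix.updateRow_ne hr]
        simp only [ite_mul, one_mul, zero_mul]
        rw [Finset.sum_ite_eq' Finset.univ pt (fun s => Wmat m ξ n s t)]
        simp only [Finset.mem_univ, if_pos]
        show (Δ j)^[(p : ℕ)] (ξ t j) (n + Pi.single j 1)
          = (Δ j)^[(p : ℕ)] (ξ t j) n + (Δ j)^[(p : ℕ) + 1] (ξ t j) n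
        rw [Function.iterate_succ_apply']
        simp [Δ]
    · -- a row of a block `j ≠ k`
      have hkj : k ≠ j := Ne.symm hj
      obtain ⟨G, c, hGc⟩ := expand j (T j (Q k j)) (T k (Q j k)) (p : ℕ)
      set kpt : Σ j : Fin N, Fin (m j) := ⟨k, ⟨0, hm k⟩⟩ with hkpt
      refine ⟨fun s => (if s = kpt then G n else 0) +
        (if s.1 = j then (if (s.2 : ℕ) < (p : ℕ) then c (s.2 : ℕ) n else 0) else 0), ?_, ?_⟩
      · intro s hs
        have hbr : b ⟨j, p⟩ = S * (1 + (j : ℕ)) + (p : ℕ) := by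
          simp only [hbdef]; rw [if_neg hj]
        have hSj : S ≤ S * (1 + (j : ℕ)) := Nat.le_mul_of_pos_right S (by omega)
        by_cases h1 : s = kpt
        · subst h1
          have e1 : b kpt = m k - 1 := by
            simp [hbdef, hkpt]
          rw [e1, hbr]
          have := hS k
          omega
        · have h2 : (if s.1 = j then (if (s.2 : ℕ) < (p : ℕ) then c (s.2 : ℕ) n else 0)
              else 0) ≠ 0 := by
            simp only [if_neg h1, zero_add] at hs
            exact hs
          rcases s with ⟨i, q⟩
          by_cases h3 : i = j
          · have h4 : (q : ℕ) < (p : ℕ) := by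
              by_contra h
              rw [if_pos h3, if_neg h] at h2
              exact h2 rfl
            have h5 : ¬ (i = k) := by rw [h3]; exact hj
            have e2 : b ⟨i, q⟩ = S * (1 + (i : ℕ)) + (q : ℕ) := by
              simp only [hbdef]; rw [if_neg h5]
            have e3 : (i : ℕ) = (j : ℕ) := by rw [h3]
            rw [e2, hbr, e3]
            omega
          · rw [if_neg h3] at h2
            exact absurd rfl h2
      · intro a
        rw [Matrix.updateRow_ne hr]
        -- left-hand side
        have hcomm : Δ k ((Δ j)^[(p : ℕ)] (ξ a j)) = (Δ j)^[(p : ℕ)] (Δ k (ξ a j)) :=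
          ((Δ_comm k j).iterate_right (p : ℕ)) (ξ a j)
        have hval : (Δ j)^[(p : ℕ)] (ξ a j) (n + Pi.single k 1)
            = (Δ j)^[(p : ℕ)] (ξ a j) n + ((Δ j)^[(p : ℕ)] (Δ k (ξ a j))) n := by
          have h := congrFun hcomm n
          simp only [Δ] at h
          linarith [h]
        have hexp := congrFun (hGc (ξ a j) (ξ a k) (hξ a k j hkj)) n
        simp only [Pi.add_apply, Pi.mul_apply, Finset.sum_apply] at hexp
        -- the sum over rows
        have hsum : (∑ s : (Σ j : Fin N, Fin (m j)),
              ((if s = kpt then G n else 0) +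
                (if s.1 = j then (if (s.2 : ℕ) < (p : ℕ) then c (s.2 : ℕ) n else 0) else 0))
              * Wmat m ξ n s a)
            = G n * ξ a k n + ∑ t ∈ Finset.range (p : ℕ), c t n * (Δ j)^[t] (ξ a j) n := by
          simp only [add_mul, Finset.sum_add_distrib, ite_mul, zero_mul]
          congr 1
          · rw [Finset.sum_ite_eq' Finset.univ kpt (fun s => G n * Wmat m ξ n s a)]
            simp [Wmat, hkpt]
          · rw [← Finset.univ_sigma_univ, Finset.sum_sigma]
            rw [Finset.sum_eq_single j]
            · have hstep : ∀ q : Fin (m j),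
                  (if ((⟨j, q⟩ : Σ j : Fin N, Fin (m j)).1 = j)
                    then (if (((⟨j, q⟩ : Σ j : Fin N, Fin (m j)).2 : ℕ) < (p : ℕ))
                      then c ((⟨j, q⟩ : Σ j : Fin N, Fin (m j)).2 : ℕ) n
                        * Wmat m ξ n ⟨j, q⟩ a else 0)
                    else 0)
                  = (if ((q : ℕ) < (p : ℕ))
                      then c (q : ℕ) n * (Δ j)^[(q : ℕ)] (ξ a j) n else 0) := by
                intro q
                rw [if_pos rfl]
                rfl
              refine (Finset.sum_congr rfl (fun q _ => hstep q)).trans ?_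
              rw [Fin.sum_univ_eq_sum_range
                (fun t => if t < (p : ℕ) then c t n * (Δ j)^[t] (ξ a j) n else 0) (m j)]
              rw [← Finset.sum_subset (Finset.range_subset_range.2 (le_of_lt p.2))
                (fun x _ hx =>
                  if_neg (fun hlt => hx (Finset.mem_range.2 hlt)))]
              exact Finset.sum_congr rfl fun t ht => if_pos (Finset.mem_range.1 ht)
            · intro i _ hi
              apply Finset.sum_eq_zero
              intro q _
              exact if_neg hi
            · intro h
              exact absurd (Finset.mem_univ j) h
        rw [hsum]
        show (Δ j)^[(p : ℕ)] (ξ a j) (n + Pi.single k 1)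
          = (Δ j)^[(p : ℕ)] (ξ a j) n
            + (G n * ξ a k n + ∑ t ∈ Finset.range (p : ℕ), c t n * (Δ j)^[t] (ξ a j) n)
        rw [hval, hξ a j k hj]
        have : ∀ t ∈ Finset.range (p : ℕ),
            (c t * (Δ j)^[t] (ξ a j)) n = c t n * (Δ j)^[t] (ξ a j) n := fun _ _ => rfl
        linarith [hexp]
end
end
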